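/- Let 0 ≤ k ≤ n and J ∈ JP(k,2n). Then p_J ∈ X(k,2n)^{sp} if and only if J ⊆ RJ, i.e. if and only if J_i ⊆ R(J_{−i}) for all i ∈ ℤ/2nℤ. -/

import Mathlib

/-! Everything reduces to the coordinate vectors spanning `p_J`. Since τ₁ sends `e_j` to
`e_{j+1}` (and `e_{2n}` to `0`), the juggling condition makes `p_J` a point of `X(k,2n)`. Since
`⟨e_s, e_t⟩ ≠ 0` exactly when `s + t = 2n + 1`, the isotropy condition `V_{J_i} ⊆ (V_{J_{-i}})^⊥`
says that no `s ∈ J_i` is of the form `2n + 1 - t` with `t ∈ J_{-i}`, i.e. `J_i ⊆ R(J_{-i})`. -/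

open Matrix

/-- The Gram matrix Ω of the symplectic form: Ω_{s,t} = (−1)^{s+1} if s+t = 2n+1
(1-indexed) and 0 otherwise. -/
noncomputable def Omega (n : ℕ) : Matrix (Fin (2*n)) (Fin (2*n)) ℂ :=
  Matrix.of fun s t =>
    if ((s : ℕ) + 1) + ((t : ℕ) + 1) = 2*n + 1 then (-1 : ℂ)^((s : ℕ) + 1 + 1) else 0

/-- The symplectic bilinear form ⟨v,w⟩ = vᵀ Ω w on ℂ^{2n}. -/
noncomputable def sform (n : ℕ) (v w : Fin (2*n) → ℂ) : ℂ :=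
  v ⬝ᵥ (Omega n).mulVec w

/-- The form, as a linear map in its first argument (second argument fixed). -/
noncomputable def sformL (n : ℕ) (w : Fin (2*n) → ℂ) : (Fin (2*n) → ℂ) →ₗ[ℂ] ℂ where
  toFun v := sform n v w
  map_add' a b := by simp [sform, add_dotProduct]
  map_smul' c a := by simp [sform, smul_dotProduct]

/-- Orthogonal complement W^⊥ = {v | ⟨v,w⟩ = 0 for all w ∈ W} w.r.t. the symplectic form. -/
noncomputable def sperp (n : ℕ) (W : Submodule ℂ (Fin (2*n) → ℂ)) :
    Submodule ℂ (Fin (2*n) → ℂ) :=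
  ⨅ w ∈ W, LinearMap.ker (sformL n w)

theorem mem_sperp {n : ℕ} {W : Submodule ℂ (Fin (2*n) → ℂ)} {v : Fin (2*n) → ℂ} :
    v ∈ sperp n W ↔ ∀ w ∈ W, sform n v w = 0 := by
  simp only [sperp, Submodule.mem_iInf, LinearMap.mem_ker]
  rfl

/-- The matrix of the shift map τ₁ : e_j ↦ e_{j+1} (1 ≤ j ≤ 2n−1), e_{2n} ↦ 0. -/
noncomputable def tauMat (n : ℕ) : Matrix (Fin (2*n)) (Fin (2*n)) ℂ :=
  Matrix.of fun s t => if (s : ℕ) = (t : ℕ) + 1 then 1 else 0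

/-- Membership in X(k,2n): a tuple of k-dimensional subspaces of ℂ^{2n} indexed by
ℤ/2nℤ with τ₁(V_i) ⊆ V_{i+1} for all i. -/
def memX (n k : ℕ) (V : ZMod (2*n) → Submodule ℂ (Fin (2*n) → ℂ)) : Prop :=
  (∀ i, Module.finrank ℂ (V i) = k) ∧
  (∀ i, Submodule.map (tauMat n).mulVecLin (V i) ≤ V (i + 1))


/-- A (k,2n)-juggling pattern: a tuple, indexed by ℤ/2nℤ, of k-element subsets of
{1,…,2n} such that for all i and all j ∈ {1,…,2n−1}, j ∈ J_i implies j+1 ∈ J_{i+1}. -/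
def IsJP (n k : ℕ) (J : ZMod (2*n) → Finset ℕ) : Prop :=
  (∀ i, J i ⊆ Finset.Icc 1 (2*n)) ∧ (∀ i, (J i).card = k) ∧
  (∀ i, ∀ j : ℕ, 1 ≤ j → j ≤ 2*n - 1 → j ∈ J i → j + 1 ∈ J (i + 1))

/-- RI = {1,…,2n} ∖ {2n+1−i : i ∈ I}. -/
def RSet (n : ℕ) (I : Finset ℕ) : Finset ℕ :=
  (Finset.Icc 1 (2*n)) \ (I.image fun i => 2*n + 1 - i)

/-- (RJ)_i = R(J_{−i}). -/
def RJP (n : ℕ) (J : ZMod (2*n) → Finset ℕ) : ZMod (2*n) → Finset ℕ :=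
  fun i => RSet n (J (-i))

/-- The coordinate subspace V_I = span{e_j : j ∈ I} ⊆ ℂ^{2n}, where elements of I
are 1-indexed. -/
noncomputable def coordSub (n : ℕ) (I : Finset ℕ) : Submodule ℂ (Fin (2*n) → ℂ) :=
  Submodule.span ℂ {v | ∃ j : Fin (2*n), (j : ℕ) + 1 ∈ I ∧ v = Pi.single j 1}

/-- Membership in X(k,2n)^{sp}: points of X(k,2n) with V_i ⊆ (V_{−i})^⊥ for all i. -/
def memXsp (n k : ℕ) (V : ZMod (2*n) → Submodule ℂ (Fin (2*n) → ℂ)) : Prop :=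
  memX n k V ∧ ∀ i, V i ≤ sperp n (V (-i))

lemma sform_eq_toLinearMap₂' (n : ℕ) (v w : Fin (2*n) → ℂ) :
    sform n v w = Matrix.toLinearMap₂' ℂ (Omega n) v w :=
  (Matrix.toLinearMap₂'_apply' _ _ _).symm

lemma span_le_sperp_span_iff {n : ℕ} {S T : Set (Fin (2*n) → ℂ)} :
    Submodule.span ℂ S ≤ sperp n (Submodule.span ℂ T) ↔ ∀ v ∈ S, ∀ w ∈ T, sform n v w = 0 := by
  refine ⟨fun h v hv w hw ↦ mem_sperp.1 (h (Submodule.subset_span hv)) w (Submodule.subset_span hw),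
    fun h ↦ Submodule.span_le.2 fun v hv ↦ mem_sperp.2 fun w hw ↦ ?_⟩
  have hT : Submodule.span ℂ T ≤ LinearMap.ker (Matrix.toLinearMap₂' ℂ (Omega n) v) :=
    Submodule.span_le.2 fun w hw' ↦ by simpa [← sform_eq_toLinearMap₂'] using h v hv w hw'
  simpa [← sform_eq_toLinearMap₂'] using hT hw

lemma sform_single_single_eq_zero_iff {n : ℕ} (s t : Fin (2*n)) :
    sform n (Pi.single s 1) (Pi.single t 1) = 0 ↔ (s : ℕ) + 1 + ((t : ℕ) + 1) ≠ 2*n + 1 := by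
  simp [sform, Omega]

lemma coordSub_eq_span_range (n : ℕ) (I : Finset ℕ) :
    coordSub n I = Submodule.span ℂ
      (Set.range fun j : {j : Fin (2*n) // (j : ℕ) + 1 ∈ I} ↦
        (Pi.single (j : Fin (2*n)) 1 : Fin (2*n) → ℂ)) := by
  rw [coordSub]
  congr 1
  ext v
  simp [eq_comm]

lemma card_fin_add_one_mem {n : ℕ} {I : Finset ℕ} (hI : I ⊆ Finset.Icc 1 (2*n)) :
    Fintype.card {j : Fin (2*n) // (j : ℕ) + 1 ∈ I} = I.card := by
  rw [← Fintype.card_coe I]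
  refine Fintype.card_congr
    { toFun := fun j ↦ ⟨(j : ℕ) + 1, j.2⟩
      invFun := fun a ↦ ⟨⟨a - 1, ?_⟩, ?_⟩
      left_inv := fun j ↦ by ext; simp
      right_inv := fun a ↦ ?_ }
  all_goals have := Finset.mem_Icc.1 (hI a.2)
  · omega
  · simp [Nat.sub_add_cancel this.1]
  · ext; dsimp only; omega

lemma finrank_coordSub {n : ℕ} {I : Finset ℕ} (hI : I ⊆ Finset.Icc 1 (2*n)) :
    Module.finrank ℂ (coordSub n I) = I.card := by
  have hli : LinearIndependent ℂ fun j : {j : Fin (2*n) // (j : ℕ) + 1 ∈ I} ↦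
      (Pi.single (j : Fin (2*n)) 1 : Fin (2*n) → ℂ) := by
    simpa [Function.comp_def] using
      (Pi.basisFun ℂ (Fin (2*n))).linearIndependent.comp _ Subtype.val_injective
  rw [coordSub_eq_span_range, finrank_span_eq_card hli, card_fin_add_one_mem hI]

lemma tauMat_mulVec_single {n : ℕ} (j : Fin (2*n)) (hj : (j : ℕ) + 1 < 2*n) :
    tauMat n *ᵥ Pi.single j 1 = Pi.single ⟨(j : ℕ) + 1, hj⟩ 1 := by
  ext s
  simp [tauMat, Pi.single_apply, Fin.ext_iff]

lemma tauMat_mulVec_single_of_add_one_eq {n : ℕ} (j : Fin (2*n)) (hj : (j : ℕ) + 1 = 2*n) :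
    tauMat n *ᵥ Pi.single j 1 = 0 := by
  ext s
  simp only [mulVec_single_one, col_apply, tauMat, of_apply, Pi.zero_apply, ite_eq_right_iff]
  omega

lemma map_tauMat_coordSub_le {n : ℕ} {I I' : Finset ℕ}
    (h : ∀ j : ℕ, 1 ≤ j → j ≤ 2*n - 1 → j ∈ I → j + 1 ∈ I') :
    (coordSub n I).map (tauMat n).mulVecLin ≤ coordSub n I' := by
  rw [coordSub, Submodule.map_span, Submodule.span_le]
  rintro _ ⟨_, ⟨j, hj, rfl⟩, rfl⟩
  rw [Matrix.mulVecLin_apply]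
  rcases (Nat.lt_or_ge ((j : ℕ) + 1) (2*n)) with hlt | hge
  · rw [tauMat_mulVec_single j hlt]
    exact Submodule.subset_span ⟨⟨(j : ℕ) + 1, hlt⟩, h ((j : ℕ) + 1) (by omega) (by omega) hj, rfl⟩
  · rw [tauMat_mulVec_single_of_add_one_eq j (by omega)]
    exact zero_mem _

lemma memX_coordSub {n k : ℕ} {J : ZMod (2*n) → Finset ℕ} (hJ : IsJP n k J) :
    memX n k fun i ↦ coordSub n (J i) :=
  ⟨fun i ↦ (finrank_coordSub (hJ.1 i)).trans (hJ.2.1 i),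
    fun i ↦ map_tauMat_coordSub_le (hJ.2.2 i)⟩

lemma coordSub_le_sperp_coordSub_iff {n : ℕ} {I I' : Finset ℕ} :
    coordSub n I ≤ sperp n (coordSub n I') ↔
      ∀ s t : Fin (2*n), (s : ℕ) + 1 ∈ I → (t : ℕ) + 1 ∈ I' →
        (s : ℕ) + 1 + ((t : ℕ) + 1) ≠ 2*n + 1 := by
  simp only [coordSub, span_le_sperp_span_iff, Set.mem_ofPred_eq, forall_exists_index, and_imp]
  refine ⟨fun h s t hs ht ↦ ?_, fun h v s hs hv w t ht hw ↦ ?_⟩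
  · exact (sform_single_single_eq_zero_iff s t).1 (h _ s hs rfl _ t ht rfl)
  · subst hv hw
    exact (sform_single_single_eq_zero_iff s t).2 (h s t hs ht)

lemma subset_RSet_iff {n : ℕ} {I I' : Finset ℕ} (hI : I ⊆ Finset.Icc 1 (2*n)) :
    I ⊆ RSet n I' ↔
      ∀ s t : Fin (2*n), (s : ℕ) + 1 ∈ I → (t : ℕ) + 1 ∈ I' →
        (s : ℕ) + 1 + ((t : ℕ) + 1) ≠ 2*n + 1 := by
  refine ⟨fun h s t hs ht hst ↦ ?_, fun h a ha ↦ ?_⟩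
  · exact (Finset.mem_sdiff.1 (h hs)).2 (Finset.mem_image.2 ⟨_, ht, by omega⟩)
  · have ha' := Finset.mem_Icc.1 (hI ha)
    refine Finset.mem_sdiff.2 ⟨hI ha, fun hb ↦ ?_⟩
    obtain ⟨b, hb, hab⟩ := Finset.mem_image.1 hb
    refine h ⟨a - 1, by omega⟩ ⟨b - 1, by omega⟩ (by simpa [Nat.sub_add_cancel ha'.1]) ?_
      (by dsimp only; omega)
    simpa [show b - 1 + 1 = b by omega]

theorem statement5_general (n k : ℕ)
    (J : ZMod (2*n) → Finset ℕ) (hJ : IsJP n k J) :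
    memXsp n k (fun i => coordSub n (J i)) ↔ ∀ i, J i ⊆ RSet n (J (-i)) := by
  rw [memXsp, and_iff_right (memX_coordSub hJ)]
  exact forall_congr' fun i ↦ coordSub_le_sperp_coordSub_iff.trans (subset_RSet_iff (hJ.1 i)).symm

/-- for k ≤ n and J ∈ JP(k,2n), the point p_J lies in X(k,2n)^{sp}
if and only if J_i ⊆ R(J_{−i}) for all i ∈ ℤ/2nℤ. -/
theorem statement5 (n k : ℕ) (hn : 1 ≤ n) (hk : k ≤ n)
    (J : ZMod (2*n) → Finset ℕ) (hJ : IsJP n k J) :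
    memXsp n k (fun i => coordSub n (J i)) ↔ ∀ i, J i ⊆ RSet n (J (-i)) :=
  statement5_general n k J hJ
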